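/- Let r ≥ 2 and a_1, …, a_r be integers ≥ 2. The ℂ-algebra R := ℂ[x_1, …, x_r]/(x_i x_j for i ≠ j; a_i x_i^{a_i} − a_j x_j^{a_j} for i ≠ j) has ℂ-dimension μ_A := 2 + Σ_{k=1}^r (a_k − 1). -/

import Mathlib

open MvPolynomial

/-- The defining ideal of the degenerate quantum cohomology ring of `ℙ¹_{A}`. -/
noncomputable def relIdeal (r : ℕ) (a : Fin r → ℕ) : Ideal (MvPolynomial (Fin r) ℂ) :=
  Ideal.span ({p | ∃ i j : Fin r, i ≠ j ∧ p = X i * X j} ∪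
    {p | ∃ i j : Fin r, i ≠ j ∧
      p = C (a i : ℂ) * X i ^ (a i) - C (a j : ℂ) * X j ^ (a j)})

/-!
Modulo the ideal, every monomial in two distinct variables vanishes, the classes `a i • x_i ^ a i`
all coincide, and hence `a i • x_i ^ (a i + 1) = x_i * (a j • x_j ^ a j) = 0` for any `j ≠ i`. So
`1`, the `x_i ^ k` with `0 < k < a i`, and the common top class span the quotient. They are linearly
independent because the matching coefficient functionals (for the top class,
`∑ i, (a i)⁻¹ • coeff (x_i ^ a i)`) annihilate every multiple of every generator of the ideal.
-/

section
variable {σ R : Type*} [CommSemiring R]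

theorem MvPolynomial.coeff_single_mul_X_mul_X (q : MvPolynomial σ R) {i j : σ} (hij : i ≠ j)
    (k : σ) (n : ℕ) : coeff (Finsupp.single k n) (q * (X i * X j)) = 0 := by
  classical
  rw [X, X, monomial_mul, one_mul, coeff_mul_monomial', if_neg]
  intro h
  have hi := Finsupp.le_def.1 h i
  have hj := Finsupp.le_def.1 h j
  simp only [Finsupp.add_apply, Finsupp.single_apply] at hi hj
  split_ifs at hi hj <;> simp_all

theorem MvPolynomial.coeff_single_mul_X_pow [DecidableEq σ] (q : MvPolynomial σ R) (i k : σ)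
    {m : ℕ} (hm : 0 < m) (n : ℕ) : coeff (Finsupp.single k n) (q * X i ^ m) =
      if k = i ∧ m ≤ n then coeff (Finsupp.single i (n - m)) q else 0 := by
  rw [X_pow_eq_monomial, coeff_mul_monomial', mul_one]
  by_cases hk : k = i
  · subst hk
    simp [Finsupp.single_tsub]
  · rw [if_neg, if_neg (fun h => hk h.1)]
    intro h
    have := Finsupp.le_def.1 h i
    simp [Ne.symm hk] at this
    omega

theorem MvPolynomial.X_mul_X_dvd_monomial {m : σ →₀ ℕ} {i j : σ} (hij : i ≠ j) (hi : m i ≠ 0)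
    (hj : m j ≠ 0) : X i * X j ∣ (monomial m 1 : MvPolynomial σ R) := by
  classical
  rw [X, X, monomial_mul, one_mul, monomial_dvd_monomial]
  refine ⟨Or.inr fun k => ?_, one_dvd _⟩
  simp only [Finsupp.add_apply, Finsupp.single_apply]
  split_ifs <;> subst_vars <;> simp_all <;> omega

end

theorem Finsupp.exists_eq_single_or_exists_ne {σ : Type*} [Nonempty σ] (m : σ →₀ ℕ) :
    (∃ i, m = Finsupp.single i (m i)) ∨ ∃ i j, i ≠ j ∧ m i ≠ 0 ∧ m j ≠ 0 := by
  rcases le_or_gt m.support.card 1 with h | h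
  · obtain ⟨i, hi⟩ := Finset.card_le_one_iff_subset_singleton.1 h
    exact Or.inl ⟨i, Finsupp.support_subset_singleton.1 hi⟩
  · obtain ⟨i, hi, j, hj, hij⟩ := Finset.one_lt_card.1 h
    exact Or.inr ⟨i, j, hij, Finsupp.mem_support_iff.1 hi, Finsupp.mem_support_iff.1 hj⟩

theorem map_eq_zero_of_mem_ideal_span {A M F : Type*} [CommSemiring A] [AddCommMonoid M]
    [FunLike F A M] [AddMonoidHomClass F A M] (ψ : F) {s : Set A}
    (h : ∀ g ∈ s, ∀ q, ψ (q * g) = 0) {p : A} (hp : p ∈ Ideal.span s) : ψ p = 0 := by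
  suffices ∀ q, ψ (q * p) = 0 by simpa using this 1
  induction hp using Submodule.span_induction with
  | mem g hg => exact h g hg
  | zero => simp
  | add x y _ _ hx hy => intro q; simp [mul_add, hx, hy]
  | smul c x _ hx => intro q; simpa [mul_assoc] using hx (q * c)

namespace relIdeal

variable {r : ℕ} {a : Fin r → ℕ}

theorem X_mul_X_mem {i j : Fin r} (hij : i ≠ j) : X i * X j ∈ relIdeal r a :=
  Ideal.subset_span (Or.inl ⟨i, j, hij, rfl⟩)

theorem C_mul_X_pow_sub_mem {i j : Fin r} (hij : i ≠ j) :
    C (a i : ℂ) * X i ^ a i - C (a j : ℂ) * X j ^ a j ∈ relIdeal r a :=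
  Ideal.subset_span (Or.inr ⟨i, j, hij, rfl⟩)

theorem X_pow_succ_mem {i j : Fin r} (hji : j ≠ i) (hai : 0 < a i) (haj : 0 < a j) :
    X i ^ (a i + 1) ∈ relIdeal r a := by
  have key : C (a i : ℂ) * X i ^ (a i + 1) =
      X i * (C (a i : ℂ) * X i ^ a i - C (a j : ℂ) * X j ^ a j) +
        C (a j : ℂ) * X j ^ (a j - 1) * (X i * X j) := by
    obtain ⟨b, hb⟩ := Nat.exists_eq_add_of_lt haj
    rw [hb, zero_add, Nat.add_sub_cancel]
    ring
  have hunit : IsUnit (C (a i : ℂ) : MvPolynomial (Fin r) ℂ) :=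
    (isUnit_iff_ne_zero.2 (Nat.cast_ne_zero.2 hai.ne')).map C
  rw [← Ideal.unit_mul_mem_iff_mem _ hunit, key]
  exact add_mem (Ideal.mul_mem_left _ _ (C_mul_X_pow_sub_mem hji.symm))
    (Ideal.mul_mem_left _ _ (X_mul_X_mem hji.symm))

variable (a) in
/-- `none` stands for `1`, `some none` for the class `a i * x_i ^ a i` (the same for every `i`)
and `some (some ⟨i, k⟩)` for `x_i ^ (k + 1)`. -/
abbrev BasisIndex : Type := Option (Option (Σ i : Fin r, Fin (a i - 1)))

variable (a) in
noncomputable def basisPoly (i₀ : Fin r) : BasisIndex a → MvPolynomial (Fin r) ℂ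
  | none => 1
  | some none => C (a i₀ : ℂ) * X i₀ ^ a i₀
  | some (some ⟨i, k⟩) => X i ^ ((k : ℕ) + 1)

variable (a) in
noncomputable def dualCoeff : BasisIndex a → MvPolynomial (Fin r) ℂ →ₗ[ℂ] ℂ
  | none => lcoeff ℂ 0
  | some none => ∑ i, (a i : ℂ)⁻¹ • lcoeff ℂ (Finsupp.single i (a i))
  | some (some ⟨i, k⟩) => lcoeff ℂ (Finsupp.single i ((k : ℕ) + 1))

variable (a) in
noncomputable def dualMap : MvPolynomial (Fin r) ℂ →ₗ[ℂ] BasisIndex a → ℂ :=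
  LinearMap.pi (dualCoeff a)

theorem dualMap_none (p : MvPolynomial (Fin r) ℂ) : dualMap a p none = coeff 0 p := rfl

theorem dualMap_top (p : MvPolynomial (Fin r) ℂ) :
    dualMap a p (some none) = ∑ i, (a i : ℂ)⁻¹ * coeff (Finsupp.single i (a i)) p := by
  simp [dualMap, dualCoeff]

theorem dualMap_pure (p : MvPolynomial (Fin r) ℂ) (i : Fin r) (k : Fin (a i - 1)) :
    dualMap a p (some (some ⟨i, k⟩)) = coeff (Finsupp.single i ((k : ℕ) + 1)) p := rfl

theorem dualMap_mul_X_mul_X (q : MvPolynomial (Fin r) ℂ) {i j : Fin r} (hij : i ≠ j) :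
    dualMap a (q * (X i * X j)) = 0 := by
  funext s
  obtain _ | _ | ⟨k, n⟩ := s
  · simpa [dualMap_none] using coeff_single_mul_X_mul_X q hij i 0
  · simp [dualMap_top, coeff_single_mul_X_mul_X q hij]
  · exact coeff_single_mul_X_mul_X q hij k _

theorem dualMap_mul_C_mul_X_pow (ha : ∀ k, 0 < a k) (q : MvPolynomial (Fin r) ℂ) (i : Fin r) :
    dualMap a (q * (C (a i : ℂ) * X i ^ a i)) = Pi.single (some none) (coeff 0 q) := by
  rw [show q * (C (a i : ℂ) * X i ^ a i) = C (a i : ℂ) * (q * X i ^ a i) by ring]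
  funext s
  obtain _ | _ | ⟨k, n⟩ := s
  · have h := coeff_single_mul_X_pow q i i (ha i) 0
    rw [Finsupp.single_zero] at h
    rw [dualMap_none, coeff_C_mul, h]
    simp [(ha i).ne']
  · have hai : (a i : ℂ) ≠ 0 := Nat.cast_ne_zero.2 (ha i).ne'
    rw [dualMap_top, Pi.single_eq_same, Finset.sum_eq_single_of_mem i (Finset.mem_univ i)]
    · rw [coeff_C_mul, coeff_single_mul_X_pow q _ _ (ha i), if_pos ⟨rfl, le_rfl⟩, Nat.sub_self,
        Finsupp.single_zero, inv_mul_cancel_left₀ hai]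
    · intro k _ hk
      rw [coeff_C_mul, coeff_single_mul_X_pow q _ _ (ha i), if_neg (fun h => hk h.1), mul_zero,
        mul_zero]
  · rw [dualMap_pure, coeff_C_mul, coeff_single_mul_X_pow q _ _ (ha i), if_neg]
    · simp
    · rintro ⟨rfl, h⟩
      have := n.isLt
      omega

theorem dualMap_eq_zero_of_mem (ha : ∀ k, 0 < a k) {p : MvPolynomial (Fin r) ℂ}
    (hp : p ∈ relIdeal r a) : dualMap a p = 0 := by
  refine map_eq_zero_of_mem_ideal_span (dualMap a) ?_ hp
  rintro _ (⟨i, j, hij, rfl⟩ | ⟨i, j, -, rfl⟩) q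
  · exact dualMap_mul_X_mul_X q hij
  · rw [mul_sub, map_sub, dualMap_mul_C_mul_X_pow ha, dualMap_mul_C_mul_X_pow ha, sub_self]

theorem single_succ_eq_single_succ_iff {i j : Fin r} {k : Fin (a i - 1)} {n : Fin (a j - 1)} :
    Finsupp.single i ((k : ℕ) + 1) = Finsupp.single j ((n : ℕ) + 1) ↔
      (⟨i, k⟩ : Σ i : Fin r, Fin (a i - 1)) = ⟨j, n⟩ := by
  constructor
  · intro h
    obtain ⟨rfl, h⟩ := ((Finsupp.single_eq_single_iff _ _ _ _).1 h).resolve_right (by omega)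
    rw [Fin.ext (Nat.succ_injective h)]
  · rintro ⟨⟩
    rfl

theorem dualMap_basisPoly (ha : ∀ k, 0 < a k) (i₀ : Fin r) (t : BasisIndex a) :
    dualMap a (basisPoly a i₀ t) = Pi.single t 1 := by
  obtain _ | _ | ⟨i, k⟩ := t
  · funext s
    obtain _ | _ | ⟨j, n⟩ := s
    · simp [basisPoly, dualMap_none]
    · simp [basisPoly, dualMap_top, coeff_one, eq_comm (a := (0 : Fin r →₀ ℕ)), (ha _).ne']
    · rw [dualMap_pure]
      simp [basisPoly, coeff_one, -Finsupp.single_add, eq_comm (a := (0 : Fin r →₀ ℕ))]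
  · simpa [basisPoly] using dualMap_mul_C_mul_X_pow ha 1 i₀
  · have hk := k.isLt
    funext s
    obtain _ | _ | ⟨j, n⟩ := s
    · simp [basisPoly, dualMap_none, X_pow_eq_monomial, coeff_monomial]
    · rw [dualMap_top, Pi.single_apply, if_neg (by simp)]
      refine Finset.sum_eq_zero fun j _ => ?_
      rw [basisPoly, X_pow_eq_monomial, coeff_monomial, if_neg, mul_zero]
      rw [Finsupp.single_eq_single_iff]
      rintro (⟨rfl, h⟩ | ⟨h, -⟩) <;> omega
    · rw [dualMap_pure, basisPoly, X_pow_eq_monomial, coeff_monomial]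
      simp only [single_succ_eq_single_succ_iff, Pi.single_apply, Option.some.injEq, eq_comm]

variable (a) in
noncomputable def basisVec (i₀ : Fin r) (t : BasisIndex a) :
    MvPolynomial (Fin r) ℂ ⧸ relIdeal r a :=
  Ideal.Quotient.mkₐ ℂ (relIdeal r a) (basisPoly a i₀ t)

theorem linearIndependent_basisVec (ha : ∀ k, 0 < a k) (i₀ : Fin r) :
    LinearIndependent ℂ (basisVec a i₀) := by
  rw [Fintype.linearIndependent_iff]
  intro c hc s
  have hmem : ∑ t, c t • basisPoly a i₀ t ∈ relIdeal r a := by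
    rw [← Ideal.Quotient.eq_zero_iff_mem, ← Ideal.Quotient.mkₐ_eq_mk ℂ]
    simpa only [map_sum, map_smul, basisVec] using hc
  have := congrFun (dualMap_eq_zero_of_mem ha hmem) s
  simpa only [map_sum, map_smul, dualMap_basisPoly ha, Finset.sum_apply, Pi.smul_apply,
    Pi.single_apply, smul_eq_mul, mul_ite, mul_one, mul_zero, Finset.sum_ite_eq,
    Finset.mem_univ, if_true, Pi.zero_apply] using this

theorem mkₐ_eq_zero {p : MvPolynomial (Fin r) ℂ} (hp : p ∈ relIdeal r a) :
    Ideal.Quotient.mkₐ ℂ (relIdeal r a) p = 0 := by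
  rwa [Ideal.Quotient.mkₐ_eq_mk, Ideal.Quotient.eq_zero_iff_mem]

theorem mkₐ_C_mul_X_pow_eq (i j : Fin r) :
    Ideal.Quotient.mkₐ ℂ (relIdeal r a) (C (a i : ℂ) * X i ^ a i) =
      Ideal.Quotient.mkₐ ℂ (relIdeal r a) (C (a j : ℂ) * X j ^ a j) := by
  obtain rfl | hij := eq_or_ne i j
  · rfl
  · rw [Ideal.Quotient.mkₐ_eq_mk, Ideal.Quotient.eq]
    exact C_mul_X_pow_sub_mem hij

theorem mkₐ_X_pow_mem_span (hr : 1 < r) (ha : ∀ k, 0 < a k) (i₀ i : Fin r) (n : ℕ) :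
    Ideal.Quotient.mkₐ ℂ (relIdeal r a) (X i ^ n) ∈
      Submodule.span ℂ (Set.range (basisVec a i₀)) := by
  rcases lt_trichotomy n (a i) with hn | rfl | hn
  · obtain _ | m := n
    · exact Submodule.subset_span ⟨none, by simp [basisVec, basisPoly]⟩
    · exact Submodule.subset_span ⟨some (some ⟨i, ⟨m, by omega⟩⟩), rfl⟩
  · have hai : (a i : ℂ) ≠ 0 := Nat.cast_ne_zero.2 (ha i).ne'
    have htop : basisVec a i₀ (some none) =
        (a i : ℂ) • Ideal.Quotient.mkₐ ℂ (relIdeal r a) (X i ^ a i) := by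
      rw [← map_smul, smul_eq_C_mul, basisVec, basisPoly, mkₐ_C_mul_X_pow_eq]
    rw [← inv_smul_smul₀ hai (Ideal.Quotient.mkₐ ℂ _ _), ← htop]
    exact Submodule.smul_mem _ _ (Submodule.subset_span ⟨_, rfl⟩)
  · obtain ⟨j, hji⟩ := Fintype.exists_ne_of_one_lt_card (by simpa using hr) i
    rw [mkₐ_eq_zero (Ideal.mem_of_dvd _ (pow_dvd_pow _ hn) (X_pow_succ_mem hji (ha i) (ha j)))]
    exact Submodule.zero_mem _

theorem mkₐ_monomial_mem_span (hr : 1 < r) (ha : ∀ k, 0 < a k) (i₀ : Fin r) (m : Fin r →₀ ℕ) :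
    Ideal.Quotient.mkₐ ℂ (relIdeal r a) (monomial m 1) ∈
      Submodule.span ℂ (Set.range (basisVec a i₀)) := by
  have : Nonempty (Fin r) := ⟨i₀⟩
  obtain ⟨i, hm⟩ | ⟨i, j, hij, hi, hj⟩ := m.exists_eq_single_or_exists_ne
  · rw [hm, ← X_pow_eq_monomial]
    exact mkₐ_X_pow_mem_span hr ha i₀ i _
  · rw [mkₐ_eq_zero (Ideal.mem_of_dvd _ (X_mul_X_dvd_monomial hij hi hj) (X_mul_X_mem hij))]
    exact Submodule.zero_mem _

theorem span_basisVec (hr : 1 < r) (ha : ∀ k, 0 < a k) (i₀ : Fin r) :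
    Submodule.span ℂ (Set.range (basisVec a i₀)) = ⊤ := by
  rw [eq_top_iff]
  rintro x -
  obtain ⟨p, rfl⟩ := Ideal.Quotient.mkₐ_surjective ℂ _ x
  induction p using MvPolynomial.induction_on' with
  | monomial m c =>
    rw [← mul_one c, ← smul_eq_mul, ← smul_monomial, map_smul]
    exact Submodule.smul_mem _ _ (mkₐ_monomial_mem_span hr ha i₀ m)
  | add p q hp hq =>
    rw [map_add]
    exact add_mem hp hq

noncomputable def basis (hr : 1 < r) (ha : ∀ k, 0 < a k) (i₀ : Fin r) :
    Module.Basis (BasisIndex a) ℂ (MvPolynomial (Fin r) ℂ ⧸ relIdeal r a) :=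
  .mk (linearIndependent_basisVec ha i₀) (span_basisVec hr ha i₀).ge

end relIdeal

theorem finrank_quotient_eq_muA (r : ℕ) (hr : 2 ≤ r) (a : Fin r → ℕ)
    (ha : ∀ k, 2 ≤ a k) :
    Module.finrank ℂ (MvPolynomial (Fin r) ℂ ⧸ relIdeal r a) = 2 + ∑ k, (a k - 1) := by
  have ha' : ∀ k, 0 < a k := fun k => two_pos.trans_le (ha k)
  rw [Module.finrank_eq_card_basis (relIdeal.basis hr ha' ⟨0, by omega⟩)]
  simp only [Fintype.card_option, Fintype.card_sigma, Fintype.card_fin]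
  omega
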